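/- arXiv:0812.1802 — 4 statements merged into one kernel-verified Lean document; each statement's English description precedes it below -/
import Mathlib

section
/- Let E be a nonnegative symmetric bilinear form on a vector space F of bounded functions containing the constant function 1, such that E(u_+, u_-) = 0 for all u ∈ F, and F is closed under u ↦ u_+ and u ↦ 1 - u. Then for every u ∈ F, writing ū = min(max(u,0),1) (the unit contraction of u), we have E(ū, ū) ≤ E(u, u). -/
/-- Markov (unit contraction) property: for a nonnegative symmetric
bilinear form `E` with `E(u₊,u₋) = 0`, `1 ∈ F` with `E(1,·) = 0`, and `F` closed
under `u ↦ u₊` and `u ↦ 1 - u`, the unit contraction `ū = min(max(u,0),1)`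
satisfies `E(ū,ū) ≤ E(u,u)`. -/
theorem stmt1 {α : Type*} (F : Submodule ℝ (α → ℝ))
    (E : (α → ℝ) → (α → ℝ) → ℝ)
    (hadd : ∀ u v w : α → ℝ, E (u + v) w = E u w + E v w)
    (hsmul : ∀ (c : ℝ) (u v : α → ℝ), E (c • u) v = c * E u v)
    (hsymm : ∀ u v : α → ℝ, E u v = E v u)
    (hnonneg : ∀ u, u ∈ F → 0 ≤ E u u)
    (hbdd : ∀ u, u ∈ F → ∃ C : ℝ, ∀ x, |u x| ≤ C)
    (hone : (fun _ : α => (1 : ℝ)) ∈ F)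
    (honeE : ∀ v, v ∈ F → E (fun _ => (1 : ℝ)) v = 0)
    (hposmem : ∀ u, u ∈ F → (fun x => max (u x) 0) ∈ F)
    (hsubmem : ∀ u, u ∈ F → (fun x => 1 - u x) ∈ F)
    (hlocal : ∀ u, u ∈ F → E (fun x => max (u x) 0) (fun x => max (-u x) 0) = 0) :
    ∀ u, u ∈ F →
      E (fun x => min (max (u x) 0) 1) (fun x => min (max (u x) 0) 1) ≤ E u u := by
  -- subtraction lemmas
  have hsubL : ∀ f g h : α → ℝ, E (fun x => f x - g x) h = E f h - E g h := by
    intro f g h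
    have : (fun x => f x - g x) = f + (-1 : ℝ) • g := by
      funext x; simp [sub_eq_add_neg]
    rw [this, hadd, hsmul]; ring
  have hsubR : ∀ f g h : α → ℝ, E h (fun x => f x - g x) = E h f - E h g := by
    intro f g h
    rw [hsymm, hsubL, hsymm f h, hsymm g h]
  -- key lemma: E(v₊,v₊) ≤ E(v,v) for v ∈ F
  have key : ∀ v, v ∈ F →
      E (fun x => max (v x) 0) (fun x => max (v x) 0) ≤ E v v := by
    intro v hv
    set p : α → ℝ := fun x => max (v x) 0 with hp
    set n : α → ℝ := fun x => max (-v x) 0 with hn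
    have hvd : v = fun x => p x - n x := by
      funext x
      show v x = max (v x) 0 - max (-v x) 0
      rcases le_total (v x) 0 with h | h
      · rw [max_eq_right h, max_eq_left (neg_nonneg.mpr h)]; ring
      · rw [max_eq_left h, max_eq_right (neg_nonpos.mpr h)]; ring
    have hnF : n ∈ F := by
      have := hposmem (-v) (F.neg_mem hv)
      simpa [hn] using this
    have hcross : E p n = 0 := hlocal v hv
    have hcross' : E n p = 0 := by rw [hsymm]; exact hcross
    have hnn : 0 ≤ E n n := hnonneg n hnF
    have expand : E v v = E p p - E p n - (E n p - E n n) := by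
      conv_lhs => rw [hvd]
      rw [hsubL, hsubR, hsubR]
    rw [expand, hcross, hcross']
    linarith
  intro u hu
  set w : α → ℝ := fun x => max (u x) 0 with hw
  have hwF : w ∈ F := hposmem u hu
  have hstep1 : E w w ≤ E u u := key u hu
  set t : α → ℝ := fun x => 1 - w x with ht
  have htF : t ∈ F := hsubmem w hwF
  set tp : α → ℝ := fun x => max (t x) 0 with htp
  have htpF : tp ∈ F := hposmem t htF
  have hbar : (fun x => min (max (u x) 0) 1) = fun x => 1 - tp x := by
    funext x
    show min (max (u x) 0) 1 = 1 - max (1 - max (u x) 0) 0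
    rcases le_total (max (u x) 0) 1 with h | h
    · have h1 : max (1 - max (u x) 0) 0 = 1 - max (u x) 0 := max_eq_left (by linarith)
      rw [min_eq_left h, h1]; ring
    · have h1 : max (1 - max (u x) 0) 0 = 0 := max_eq_right (by linarith)
      rw [min_eq_right h, h1]; ring
  have hone' : ∀ g, g ∈ F → E g (fun _ : α => (1:ℝ)) = 0 := by
    intro g hg; rw [hsymm]; exact honeE g hg
  have expand2 : ∀ g, g ∈ F → E (fun x => 1 - g x) (fun x => 1 - g x) = E g g := by
    intro g hg
    rw [hsubL, hsubR, hsubR]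
    rw [honeE g hg, hone' g hg, honeE _ hone]
    ring
  rw [hbar, expand2 tp htpF]
  calc E tp tp ≤ E t t := key t htF
    _ = E w w := by rw [ht, expand2 w hwF]
    _ ≤ E u u := hstep1
end

section
/- Let S be a finite set of indices of size m ≤ 2^d, and consider right-continuous piecewise-constant processes p_i(t) ≥ 0, i = 1,…,m, with Σ_i p_i(t) = 1, satisfying: (i) p_i(0) ∈ {0} ∪ [2^{-d}, 1] for each i; (ii) at any jump time T, each new value p_i(T) is an average p_i(T) = M_i^{-1} Σ_{j∈J_i} lim_{s→T−} p_j(s) over a set J_i of indices of size M_i ≤ 2^d all of which share the common new value; (iii) once p_i(t) > 0 it stays positive. Then at all times t, every nonzero p_i(t) satisfies p_i(t) ≥ 2^{-d·k(t)} ≥ 2^{-d·2^d}, where k(t) = #{i : p_i(t) > 0}. -/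
open Filter Set

private lemma two_zpow_anti' {a b : ℕ} (h : a ≤ b) :
    (2:ℝ) ^ (-(b:ℤ)) ≤ (2:ℝ) ^ (-(a:ℤ)) := by
  apply zpow_le_zpow_right₀ one_le_two; omega

/-- combinatorial lower bound for the conditional location
probabilities `p_i(t)`: right-continuous piecewise-constant nonnegative processes
summing to `1`, with initial values in `{0} ∪ [2^{-d}, 1]`, whose values at any
time `T > 0` are averages over groups of at most `2^d` of the left-limit values
(all members of a group sharing the common new value), and such that positivity
persists.  Then every nonzero `p_i(t)` is at least `2^{-d·k(t)} ≥ 2^{-d·2^d}`,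
where `k(t)` is the number of nonzero coordinates at time `t`. -/
theorem stmt7 (d m : ℕ) (hm : m ≤ 2 ^ d) (p : Fin m → ℝ → ℝ)
    (hnonneg : ∀ (i : Fin m) (t : ℝ), 0 ≤ t → 0 ≤ p i t)
    (hsum : ∀ t : ℝ, 0 ≤ t → ∑ i, p i t = 1)
    (hinit : ∀ i : Fin m, p i 0 = 0 ∨ (2 : ℝ) ^ (-(d : ℤ)) ≤ p i 0)
    (hrc : ∀ (i : Fin m) (t : ℝ), 0 ≤ t →
      ∃ δ > (0 : ℝ), ∀ s ∈ Set.Ico t (t + δ), p i s = p i t)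
    (hjump : ∀ T : ℝ, 0 < T → ∃ q : Fin m → ℝ,
      (∀ i : Fin m, ∀ᶠ s in nhdsWithin T (Set.Iio T), p i s = q i) ∧
      ∀ i : Fin m, ∃ J : Finset (Fin m), i ∈ J ∧ J.card ≤ 2 ^ d ∧
        (∀ j ∈ J, p j T = p i T) ∧ p i T * (J.card : ℝ) = ∑ j ∈ J, q j)
    (hpersist : ∀ (i : Fin m) (s t : ℝ), 0 ≤ s → s ≤ t → 0 < p i s → 0 < p i t) :
    ∀ t : ℝ, 0 ≤ t → ∀ i : Fin m, 0 < p i t →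
      (2 : ℝ) ^ (-((d * Set.ncard {j : Fin m | 0 < p j t} : ℕ) : ℤ)) ≤ p i t ∧
      (2 : ℝ) ^ (-((d * 2 ^ d : ℕ) : ℤ)) ≤
        (2 : ℝ) ^ (-((d * Set.ncard {j : Fin m | 0 < p j t} : ℕ) : ℤ)) := by
  have hm0 : 0 < m := by
    rcases Nat.eq_zero_or_pos m with h | h
    · exfalso; have := hsum 0 le_rfl; subst h; simp at this
    · exact h
  set P : ℝ → Prop := fun t => ∀ i : Fin m, 0 < p i t →
    (2 : ℝ) ^ (-((d * Set.ncard {j : Fin m | 0 < p j t} : ℕ) : ℤ)) ≤ p i t with hPdef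
  -- base case
  have base : P 0 := by
    intro i hi
    rcases hinit i with h0 | h0
    · rw [h0] at hi; exact absurd hi (lt_irrefl 0)
    · refine le_trans (two_zpow_anti' ?_) h0
      have h1 : 1 ≤ Set.ncard {j : Fin m | 0 < p j 0} := by
        have hne : ({j : Fin m | 0 < p j 0}).Nonempty := ⟨i, hi⟩
        have := (Set.ncard_pos (Set.toFinite _)).mpr hne
        omega
      calc d = d * 1 := (mul_one d).symm
      _ ≤ d * Set.ncard {j : Fin m | 0 < p j 0} := Nat.mul_le_mul_left d h1
  -- right stability: locally constant to the right, simultaneously in i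
  have stab : ∀ t, 0 ≤ t → ∃ δ > (0:ℝ), ∀ s ∈ Set.Ico t (t + δ), ∀ i, p i s = p i t := by
    intro t ht
    choose δ hδ hδ' using fun i => hrc i t ht
    have hne : (Finset.univ : Finset (Fin m)).Nonempty := ⟨⟨0, hm0⟩, Finset.mem_univ _⟩
    refine ⟨Finset.univ.inf' hne δ, (Finset.lt_inf'_iff hne).mpr fun i _ => hδ i, ?_⟩
    intro s hs i
    refine hδ' i s ⟨hs.1, lt_of_lt_of_le hs.2 ?_⟩
    have := Finset.inf'_le δ (Finset.mem_univ i)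
    linarith
  -- key jump lemma
  have key : ∀ T, 0 < T → (∀ s, 0 ≤ s → s < T → P s) → P T := by
    intro T hT hind i hiT
    obtain ⟨q, hq, hJall⟩ := hjump T hT
    have hev : ∀ᶠ s in nhdsWithin T (Set.Iio T), ((∀ j, p j s = q j) ∧ 0 < s) ∧ s ∈ Set.Iio T :=
      ((eventually_all.mpr hq).and
        (eventually_nhdsWithin_of_eventually_nhds (eventually_gt_nhds hT))).and
        eventually_mem_nhdsWithin
    obtain ⟨s, ⟨hsq, hs0⟩, hsT⟩ := hev.exists
    have hsT : s < T := hsT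
    have hsub : {j : Fin m | 0 < p j s} ⊆ {j : Fin m | 0 < p j T} :=
      fun j hj => hpersist j s T hs0.le hsT.le hj
    have hq_nonneg : ∀ j, 0 ≤ q j := fun j => (hsq j) ▸ hnonneg j s hs0.le
    set c : ℝ := (2 : ℝ) ^ (-((d * Set.ncard {j : Fin m | 0 < p j s} : ℕ) : ℤ)) with hc
    have hc0 : 0 < c := by positivity
    have hqbound : ∀ j, 0 < q j → c ≤ q j := by
      intro j hj
      rw [← hsq j] at hj ⊢
      exact hind s hs0.le hsT j hj
    obtain ⟨J, hiJ, hJcard, hJeq, hJsum⟩ := hJall i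
    have hJpos : 0 < (J.card : ℝ) := by
      exact_mod_cast Finset.card_pos.mpr ⟨i, hiJ⟩
    have hJle : (J.card : ℝ) ≤ 2 ^ d := by exact_mod_cast hJcard
    have hkk : d * Set.ncard {j : Fin m | 0 < p j s} ≤ d * Set.ncard {j : Fin m | 0 < p j T} :=
      Nat.mul_le_mul_left d (Set.ncard_le_ncard hsub (Set.toFinite _))
    by_cases hall : ∀ j ∈ J, 0 < q j
    · -- all left limits positive: average at least c
      have hsumge : (J.card : ℝ) * c ≤ ∑ j ∈ J, q j := by
        have := Finset.card_nsmul_le_sum J q c fun j hj => hqbound j (hall j hj)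
        simpa [nsmul_eq_mul] using this
      rw [← hJsum] at hsumge
      have h1 : c ≤ p i T := by nlinarith
      exact le_trans (two_zpow_anti' hkk) h1
    · push_neg at hall
      obtain ⟨j0, hj0J, hj0⟩ := hall
      have hj0s : p j0 s = 0 := le_antisymm ((hsq j0) ▸ hj0) (hnonneg j0 s hs0.le)
      have hj0T : 0 < p j0 T := by rw [hJeq j0 hj0J]; exact hiT
      have hssub : {j : Fin m | 0 < p j s} ⊂ {j : Fin m | 0 < p j T} := by
        refine ⟨hsub, fun h => ?_⟩
        have : 0 < p j0 s := h hj0T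
        rw [hj0s] at this; exact lt_irrefl 0 this
      have hklt : Set.ncard {j : Fin m | 0 < p j s} < Set.ncard {j : Fin m | 0 < p j T} :=
        Set.ncard_lt_ncard hssub (Set.toFinite _)
      have hsumpos : 0 < ∑ j ∈ J, q j := by rw [← hJsum]; exact mul_pos hiT hJpos
      obtain ⟨j1, hj1J, hj1⟩ : ∃ j1 ∈ J, 0 < q j1 := by
        by_contra h
        push_neg at h
        have hz : ∑ j ∈ J, q j = 0 :=
          Finset.sum_eq_zero fun j hj => le_antisymm (h j hj) (hq_nonneg j)
        rw [hz] at hsumpos; exact lt_irrefl 0 hsumpos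
      have hterm : c ≤ ∑ j ∈ J, q j :=
        le_trans (hqbound j1 hj1) (Finset.single_le_sum (fun j _ => hq_nonneg j) hj1J)
      rw [← hJsum] at hterm
      have h2d : (0:ℝ) < 2 ^ d := by positivity
      have hcle : c ≤ p i T * 2 ^ d :=
        le_trans hterm (mul_le_mul_of_nonneg_left hJle hiT.le)
      have h1 : c * ((2:ℝ) ^ d)⁻¹ ≤ p i T := by
        have hdv := (div_le_iff₀ h2d).mpr hcle
        calc c * ((2:ℝ) ^ d)⁻¹ = c / 2 ^ d := by ring
        _ ≤ p i T := hdv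
      refine le_trans ?_ h1
      have hrew : c * ((2:ℝ) ^ d)⁻¹ =
          (2:ℝ) ^ (-((d * Set.ncard {j : Fin m | 0 < p j s} + d : ℕ) : ℤ)) := by
        rw [hc, ← zpow_natCast (2:ℝ) d, ← zpow_neg, ← zpow_add₀ (two_ne_zero)]
        congr 1
        push_cast
        ring
      rw [hrew]
      apply two_zpow_anti'
      calc d * Set.ncard {j : Fin m | 0 < p j T}
          ≥ d * (Set.ncard {j : Fin m | 0 < p j s} + 1) := Nat.mul_le_mul_left d hklt
      _ = d * Set.ncard {j : Fin m | 0 < p j s} + d := by ring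
  -- continuous induction: P holds for all t ≥ 0
  have main : ∀ t, 0 ≤ t → P t := by
    by_contra hcon
    push_neg at hcon
    obtain ⟨t0, ht0, hPt0⟩ := hcon
    set B : Set ℝ := {t | 0 ≤ t ∧ ¬ P t} with hB
    have hBne : B.Nonempty := ⟨t0, ht0, hPt0⟩
    have hBbdd : BddBelow B := ⟨0, fun x hx => hx.1⟩
    have hT0 : 0 ≤ sInf B := le_csInf hBne fun x hx => hx.1
    have hind : ∀ s, 0 ≤ s → s < sInf B → P s := by
      intro s hs hsT
      by_contra h
      have : sInf B ≤ s := csInf_le hBbdd ⟨hs, h⟩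
      linarith
    have hPT : P (sInf B) := by
      rcases eq_or_lt_of_le hT0 with h | h
      · rw [← h]; exact base
      · exact key _ h hind
    obtain ⟨δ, hδ0, hδ⟩ := stab (sInf B) hT0
    obtain ⟨b, hbB, hb⟩ := (csInf_lt_iff hBbdd hBne).mp (by linarith : sInf B < sInf B + δ)
    have hbT : sInf B ≤ b := csInf_le hBbdd hbB
    have hPb : P b := by
      intro j hj
      have heq : ∀ i, p i b = p i (sInf B) := hδ b ⟨hbT, hb⟩
      have hkeq : {j : Fin m | 0 < p j b} = {j : Fin m | 0 < p j (sInf B)} := by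
        ext j'; simp [heq j']
      rw [heq j, hkeq]
      exact hPT j (by rw [← heq j]; exact hj)
    exact hbB.2 hPb
  -- conclude
  intro t ht i hi
  refine ⟨main t ht i hi, two_zpow_anti' ?_⟩
  apply Nat.mul_le_mul_left d
  calc Set.ncard {j : Fin m | 0 < p j t}
      ≤ Set.ncard (Set.univ : Set (Fin m)) :=
        Set.ncard_le_ncard (Set.subset_univ _) Set.finite_univ
  _ = m := by simp [Set.ncard_univ]
  _ ≤ 2 ^ d := hm
end

section
/- Key step of the uniqueness argument: Let A, B be nonnegative quadratic forms on a common domain W such that for all f ∈ W with A(f) > 0, the ratio B(f)/A(f) lies in [c, C] for fixed constants 0 < c ≤ C < ∞. Set λ = inf(B|A). Suppose that for every δ > 0, the form C_δ := (1+δ)B − λA also satisfies the uniform ratio bound: sup(C_δ|A)/inf(C_δ|A) ≤ e^{K} for a constant K independent of δ. Then sup(B|A) = inf(B|A), i.e. B = λA on W. -/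
/-!
Write `λ = inf(B|A)` and `M = sup(B|A)`. Since `C_δ/A = (1+δ)(B/A) - λ` is an increasing affine
function of `B/A`, we get `sup(C_δ|A) = (1+δ)M - λ` and `inf(C_δ|A) = δλ`, which is positive
because `λ ≥ c`. So the uniform bound reads `M - λ ≤ δ (λ e^K - M)` for every `δ > 0`, and letting
`δ → 0` gives `M ≤ λ`. Once the ratio `B/A` is constant, `B = λA` (on the null set of `A` both
sides vanish).
-/

/-- The set of ratios `B(f,f)/A(f,f)` over `f` with `A(f,f) > 0`. -/
def ratioSet {W : Type*} (A B : W → ℝ) : Set ℝ :=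
  {r | ∃ f, 0 < A f ∧ r = B f / A f}

open Filter Topology

section RatioSet

variable {W : Type*} {A : W → ℝ}

theorem ratioSet_nonempty (B : W → ℝ) (h : ∃ f, 0 < A f) : (ratioSet A B).Nonempty :=
  let ⟨f, hf⟩ := h
  ⟨B f / A f, f, hf, rfl⟩

theorem bddAbove_ratioSet {B : W → ℝ} {C : ℝ} (h : ∀ f, 0 < A f → B f / A f ≤ C) :
    BddAbove (ratioSet A B) :=
  ⟨C, by rintro _ ⟨f, hf, rfl⟩; exact h f hf⟩

theorem bddBelow_ratioSet {B : W → ℝ} {c : ℝ} (h : ∀ f, 0 < A f → c ≤ B f / A f) :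
    BddBelow (ratioSet A B) :=
  ⟨c, by rintro _ ⟨f, hf, rfl⟩; exact h f hf⟩

theorem le_csInf_ratioSet {B : W → ℝ} {c : ℝ} (hne : ∃ f, 0 < A f)
    (h : ∀ f, 0 < A f → c ≤ B f / A f) : c ≤ sInf (ratioSet A B) :=
  le_csInf (ratioSet_nonempty B hne) (by rintro _ ⟨f, hf, rfl⟩; exact h f hf)

theorem ratioSet_mul_sub_mul (B : W → ℝ) (a b : ℝ) :
    ratioSet A (fun f => a * B f - b * A f) = (fun r => a * r - b) '' ratioSet A B := by
  ext r
  constructor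
  · rintro ⟨f, hf, rfl⟩
    exact ⟨B f / A f, ⟨f, hf, rfl⟩, by field_simp⟩
  · rintro ⟨_, ⟨f, hf, rfl⟩, rfl⟩
    exact ⟨f, hf, by field_simp⟩

theorem csSup_ratioSet_mul_sub_mul {B : W → ℝ} {a : ℝ} (b : ℝ) (ha : 0 ≤ a)
    (hne : ∃ f, 0 < A f) (hbdd : BddAbove (ratioSet A B)) :
    sSup (ratioSet A fun f => a * B f - b * A f) = a * sSup (ratioSet A B) - b := by
  have hmono : Monotone fun r : ℝ => a * r - b := fun x y hxy => by
    simpa using mul_le_mul_of_nonneg_left hxy ha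
  rw [ratioSet_mul_sub_mul, ← hmono.map_csSup_of_continuousAt (by fun_prop)
    (ratioSet_nonempty B hne) hbdd]

theorem csInf_ratioSet_mul_sub_mul {B : W → ℝ} {a : ℝ} (b : ℝ) (ha : 0 ≤ a)
    (hne : ∃ f, 0 < A f) (hbdd : BddBelow (ratioSet A B)) :
    sInf (ratioSet A fun f => a * B f - b * A f) = a * sInf (ratioSet A B) - b := by
  have hmono : Monotone fun r : ℝ => a * r - b := fun x y hxy => by
    simpa using mul_le_mul_of_nonneg_left hxy ha
  rw [ratioSet_mul_sub_mul, ← hmono.map_csInf_of_continuousAt (by fun_prop)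
    (ratioSet_nonempty B hne) hbdd]

theorem eq_csInf_ratioSet_mul {B : W → ℝ} (hA0 : ∀ f, 0 ≤ A f)
    (hzero : ∀ f, A f = 0 → B f = 0) (hbdda : BddAbove (ratioSet A B))
    (hbddb : BddBelow (ratioSet A B)) (hconst : sSup (ratioSet A B) = sInf (ratioSet A B))
    (f : W) : B f = sInf (ratioSet A B) * A f := by
  rcases (hA0 f).eq_or_lt with hAf | hAf
  · rw [← hAf, hzero f hAf.symm, mul_zero]
  · have hmem : B f / A f ∈ ratioSet A B := ⟨f, hAf, rfl⟩
    have hratio : B f / A f = sInf (ratioSet A B) :=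
      le_antisymm (hconst ▸ le_csSup hbdda hmem) (csInf_le hbddb hmem)
    rw [← hratio, div_mul_cancel₀ _ hAf.ne']

end RatioSet

theorem le_of_forall_pos_div_le {M l E : ℝ} (hl : 0 < l)
    (h : ∀ δ : ℝ, 0 < δ → ((1 + δ) * M - l) / (δ * l) ≤ E) : M ≤ l := by
  have hgap : ∀ δ : ℝ, 0 < δ → M - l ≤ δ * (l * E - M) := fun δ hδ => by
    have := (div_le_iff₀ (mul_pos hδ hl)).1 (h δ hδ)
    linarith
  have hlim : Tendsto (fun δ : ℝ => δ * (l * E - M)) (𝓝[>] 0) (𝓝 0) := by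
    have hcont : Continuous fun δ : ℝ => δ * (l * E - M) := by fun_prop
    simpa using (hcont.tendsto 0).mono_left nhdsWithin_le_nhds
  have := ge_of_tendsto hlim (eventually_nhdsWithin_of_forall hgap)
  linarith

theorem stmt9_general {W : Type*}
    (A B : W → ℝ)
    (hA0 : ∀ f, 0 ≤ A f)
    (hzero : ∀ f, A f = 0 → B f = 0)
    (hne : ∃ f, 0 < A f)
    (c C : ℝ) (hc : 0 < c)
    (hbound : ∀ f, 0 < A f → c ≤ B f / A f ∧ B f / A f ≤ C)
    (K : ℝ)
    (hK : ∀ δ : ℝ, 0 < δ →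
      sSup (ratioSet A fun f => (1 + δ) * B f - sInf (ratioSet A B) * A f) /
        sInf (ratioSet A fun f => (1 + δ) * B f - sInf (ratioSet A B) * A f) ≤
          Real.exp K) :
    sSup (ratioSet A B) = sInf (ratioSet A B) ∧
      ∀ f, B f = sInf (ratioSet A B) * A f := by
  have hbdda := bddAbove_ratioSet fun f hf => (hbound f hf).2
  have hbddb := bddBelow_ratioSet fun f hf => (hbound f hf).1
  have hl : 0 < sInf (ratioSet A B) :=
    hc.trans_le (le_csInf_ratioSet hne fun f hf => (hbound f hf).1)
  have hconst : sSup (ratioSet A B) = sInf (ratioSet A B) := by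
    refine le_antisymm (le_of_forall_pos_div_le (E := Real.exp K) hl fun δ hδ => ?_)
      (csInf_le_csSup (ratioSet_nonempty B hne) hbddb hbdda)
    have hδ' : (0 : ℝ) ≤ 1 + δ := by linarith
    have := hK δ hδ
    rwa [csSup_ratioSet_mul_sub_mul _ hδ' hne hbdda, csInf_ratioSet_mul_sub_mul _ hδ' hne hbddb,
      show (1 + δ) * sInf (ratioSet A B) - sInf (ratioSet A B) = δ * sInf (ratioSet A B) by
        ring] at this
  exact ⟨hconst, eq_csInf_ratioSet_mul hA0 hzero hbdda hbddb hconst⟩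

/-- key step of the uniqueness argument: if the ratios `B/A` lie in
`[c, C]`, `λ = inf(B|A)`, and for every `δ > 0` the form `C_δ = (1+δ)B − λA`
satisfies the uniform projective bound `sup(C_δ|A)/inf(C_δ|A) ≤ e^K` with `K`
independent of `δ`, then `sup(B|A) = inf(B|A)`, i.e. `B = λA` on `W`. -/
theorem stmt9 {W : Type*} [AddCommGroup W] [Module ℝ W]
    (A B : W → ℝ)
    (hA0 : ∀ f, 0 ≤ A f) (hB0 : ∀ f, 0 ≤ B f)
    (hzero : ∀ f, A f = 0 → B f = 0)
    (hne : ∃ f, 0 < A f)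
    (c C : ℝ) (hc : 0 < c) (hcC : c ≤ C)
    (hbound : ∀ f, 0 < A f → c ≤ B f / A f ∧ B f / A f ≤ C)
    (K : ℝ)
    (hK : ∀ δ : ℝ, 0 < δ →
      sSup (ratioSet A fun f => (1 + δ) * B f - sInf (ratioSet A B) * A f) /
        sInf (ratioSet A fun f => (1 + δ) * B f - sInf (ratioSet A B) * A f) ≤
          Real.exp K) :
    sSup (ratioSet A B) = sInf (ratioSet A B) ∧
      ∀ f, B f = sInf (ratioSet A B) * A f :=
  stmt9_general A B hA0 hzero hne c C hc hbound K hK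
end

section
/- Let H : [0,1] → [0,∞) be constructed as follows: fix constants L > 1, and a sequence a_n > 0 with a_{n+1} ≤ a_n ≤ C₂ a_{n+1} and a_{n+m} ≤ C₁ a_n L^{-mβ₀} for all n, m ≥ 0 (with β₀ > 0); set H(L^{-n}) = a_n and interpolate linearly, H(0) = 0. Then there exist constants C₃, C₄ > 0 and β' ≥ β₀ (depending only on C₁, C₂, L, β₀) such that C₃ (t/s)^{β₀} ≤ H(t)/H(s) ≤ C₄ (t/s)^{β'} for all 0 < s ≤ t ≤ 1, and H satisfies the doubling property H(2r) ≤ C₅ H(r) for 0 ≤ r ≤ 1/2. -/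
/-!
Each `x ∈ (0, 1]` lies in a block `[L^{-n-1}, L^{-n}]`, `n = ⌊-log_L x⌋`, on which `H` lies
between `a_{n+1}` and `a_n`. For `s ≤ t` in blocks `m = n + k` and `n`, the ratio `t / s` lies
between `L^{k-1}` and `L^{k+1}`, while `H t / H s` is bounded below by `a_{n+1} / a_{n+k}`,
controlled by the decay `a_{n+k} ≤ C₁ a_n L^{-kβ₀}` together with `a_n ≤ C₂ a_{n+1}`, and above by
`a_n / a_{n+k+1} ≤ C₂^{k+1}`. Writing `C₂ = L^γ` with `γ = log_L C₂` turns `C₂^{k-1}` into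
`(L^{k-1})^γ ≤ (t / s)^γ`, and one takes `β' = max β₀ γ`. Doubling is the upper bound at `t = 2s`.
-/

open Real Set

namespace InterpolatedScale

def IsLinearInterpolation (L : ℝ) (a : ℕ → ℝ) (H : ℝ → ℝ) : Prop :=
  ∀ n : ℕ, ∀ t ∈ Icc (L ^ (-(n : ℝ) - 1)) (L ^ (-(n : ℝ))),
    H t = a (n + 1) + (a n - a (n + 1)) *
      ((t - L ^ (-(n : ℝ) - 1)) / (L ^ (-(n : ℝ)) - L ^ (-(n : ℝ) - 1)))

noncomputable def level (L x : ℝ) : ℕ := ⌊-logb L x⌋₊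

variable {L x s t : ℝ}

lemma rpow_neg_level_sub_one_le (hL : 1 < L) (hx : 0 < x) :
    L ^ (-(level L x : ℝ) - 1) ≤ x := by
  rw [← le_logb_iff_rpow_le hL hx, level]
  linarith [Nat.lt_floor_add_one (-logb L x)]

lemma le_rpow_neg_level (hL : 1 < L) (hx : 0 < x) (hx1 : x ≤ 1) :
    x ≤ L ^ (-(level L x : ℝ)) := by
  rw [← logb_le_iff_le_rpow hL hx, level]
  linarith [Nat.floor_le (neg_nonneg.2 (logb_nonpos hL hx.le hx1))]

lemma mem_Icc_level (hL : 1 < L) (hx : 0 < x) (hx1 : x ≤ 1) :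
    x ∈ Icc (L ^ (-(level L x : ℝ) - 1)) (L ^ (-(level L x : ℝ))) :=
  ⟨rpow_neg_level_sub_one_le hL hx, le_rpow_neg_level hL hx hx1⟩

lemma level_le_level (hL : 1 < L) (hs : 0 < s) (hst : s ≤ t) : level L t ≤ level L s :=
  Nat.floor_mono (neg_le_neg (logb_le_logb_of_le hL hs hst))

lemma div_le_rpow_level_sub (hL : 1 < L) (hs : 0 < s) (hst : s ≤ t) (ht1 : t ≤ 1) :
    t / s ≤ L ^ (((level L s - level L t : ℕ) : ℝ) + 1) := by
  have hL0 : 0 < L := by linarith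
  calc t / s ≤ L ^ (-(level L t : ℝ)) / L ^ (-(level L s : ℝ) - 1) :=
        div_le_div₀ (by positivity) (le_rpow_neg_level hL (hs.trans_le hst) ht1)
          (by positivity) (rpow_neg_level_sub_one_le hL hs)
    _ = L ^ (((level L s - level L t : ℕ) : ℝ) + 1) := by
        rw [← rpow_sub hL0, Nat.cast_sub (level_le_level hL hs hst)]
        ring_nf

lemma rpow_level_sub_le_div (hL : 1 < L) (hs : 0 < s) (hst : s ≤ t) (ht1 : t ≤ 1) :
    L ^ (((level L s - level L t : ℕ) : ℝ) - 1) ≤ t / s := by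
  have hL0 : 0 < L := by linarith
  have ht : 0 < t := hs.trans_le hst
  calc L ^ (((level L s - level L t : ℕ) : ℝ) - 1)
        = L ^ (-(level L t : ℝ) - 1) / L ^ (-(level L s : ℝ)) := by
        rw [← rpow_sub hL0, Nat.cast_sub (level_le_level hL hs hst)]
        ring_nf
    _ ≤ t / s :=
        div_le_div₀ ht.le (rpow_neg_level_sub_one_le hL ht) hs
          (le_rpow_neg_level hL hs (hst.trans ht1))

variable {a : ℕ → ℝ} {H : ℝ → ℝ}

lemma IsLinearInterpolation.apply_mem_Icc (hH : IsLinearInterpolation L a H) (hL : 1 < L)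
    (hdec : ∀ n, a (n + 1) ≤ a n) {n : ℕ}
    (hx : x ∈ Icc (L ^ (-(n : ℝ) - 1)) (L ^ (-(n : ℝ)))) :
    H x ∈ Icc (a (n + 1)) (a n) := by
  have hgap : L ^ (-(n : ℝ) - 1) < L ^ (-(n : ℝ)) := rpow_lt_rpow_of_exponent_lt hL (by linarith)
  have hθ0 : 0 ≤ (x - L ^ (-(n : ℝ) - 1)) / (L ^ (-(n : ℝ)) - L ^ (-(n : ℝ) - 1)) :=
    div_nonneg (by linarith [hx.1]) (by linarith)
  have hθ1 : (x - L ^ (-(n : ℝ) - 1)) / (L ^ (-(n : ℝ)) - L ^ (-(n : ℝ) - 1)) ≤ 1 :=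
    (div_le_one (by linarith)).2 (by linarith [hx.2])
  rw [hH n x hx]
  constructor <;> nlinarith [hdec n]

lemma IsLinearInterpolation.apply_mem_Icc_level (hH : IsLinearInterpolation L a H)
    (hL : 1 < L) (hdec : ∀ n, a (n + 1) ≤ a n) (hx : 0 < x) (hx1 : x ≤ 1) :
    H x ∈ Icc (a (level L x + 1)) (a (level L x)) :=
  hH.apply_mem_Icc hL hdec (mem_Icc_level hL hx hx1)

lemma IsLinearInterpolation.apply_pos (hH : IsLinearInterpolation L a H) (hL : 1 < L)
    (ha : ∀ n, 0 < a n) (hdec : ∀ n, a (n + 1) ≤ a n) (hx : 0 < x) (hx1 : x ≤ 1) :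
    0 < H x :=
  (ha _).trans_le (hH.apply_mem_Icc_level hL hdec hx hx1).1

lemma le_pow_mul_add {C : ℝ} (hC : 0 ≤ C) (hcmp : ∀ n, a n ≤ C * a (n + 1)) (n k : ℕ) :
    a n ≤ C ^ k * a (n + k) := by
  induction k with
  | zero => simp
  | succ k ih =>
    calc a n ≤ C ^ k * a (n + k) := ih
      _ ≤ C ^ k * (C * a (n + k + 1)) := by gcongr; exact hcmp _
      _ = C ^ (k + 1) * a (n + (k + 1)) := by ring_nf

lemma mul_rpow_le {C β : ℝ} (hL : 0 < L)
    (hsub : ∀ n m : ℕ, a (n + m) ≤ C * a n * L ^ (-(m : ℝ) * β)) (n k : ℕ) :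
    a (n + k) * L ^ ((k : ℝ) * β) ≤ C * a n := by
  calc a (n + k) * L ^ ((k : ℝ) * β) ≤ C * a n * L ^ (-(k : ℝ) * β) * L ^ ((k : ℝ) * β) := by
        gcongr; exact hsub n k
    _ = C * a n := by rw [mul_assoc, ← rpow_add hL]; simp

lemma IsLinearInterpolation.rpow_mul_le {C₁ C₂ β : ℝ} (hH : IsLinearInterpolation L a H)
    (hL : 1 < L) (hβ : 0 ≤ β) (hC₁ : 0 ≤ C₁) (hC₂ : 0 ≤ C₂) (ha : ∀ n, 0 < a n)
    (hdec : ∀ n, a (n + 1) ≤ a n) (hcmp : ∀ n, a n ≤ C₂ * a (n + 1))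
    (hsub : ∀ n m : ℕ, a (n + m) ≤ C₁ * a n * L ^ (-(m : ℝ) * β))
    (hs : 0 < s) (hst : s ≤ t) (ht1 : t ≤ 1) :
    (t / s) ^ β * H s ≤ C₁ * C₂ * L ^ β * H t := by
  have hL0 : 0 < L := by linarith
  have ht : 0 < t := hs.trans_le hst
  have hs1 : s ≤ 1 := hst.trans ht1
  set n := level L t
  set k := level L s - n
  have hm : level L s = n + k := by have := level_le_level hL hs hst; omega
  have hHs : H s ≤ a (n + k) := hm ▸ (hH.apply_mem_Icc_level hL hdec hs hs1).2
  have hHt : a (n + 1) ≤ H t := (hH.apply_mem_Icc_level hL hdec ht ht1).1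
  calc (t / s) ^ β * H s ≤ (L ^ ((k : ℝ) + 1)) ^ β * a (n + k) :=
        mul_le_mul (rpow_le_rpow (by positivity) (div_le_rpow_level_sub hL hs hst ht1) hβ) hHs
          (hH.apply_pos hL ha hdec hs hs1).le (by positivity)
    _ = L ^ β * (a (n + k) * L ^ ((k : ℝ) * β)) := by
        rw [← rpow_mul hL0.le, add_mul, one_mul, rpow_add hL0]; ring
    _ ≤ L ^ β * (C₁ * (C₂ * H t)) := by
        refine mul_le_mul_of_nonneg_left ?_ (by positivity)
        calc a (n + k) * L ^ ((k : ℝ) * β) ≤ C₁ * a n := mul_rpow_le hL0 hsub n k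
          _ ≤ C₁ * (C₂ * H t) := by gcongr; exact (hcmp n).trans (by gcongr)
    _ = C₁ * C₂ * L ^ β * H t := by ring

lemma rpow_eq_rpow_rpow_logb {C : ℝ} (hL : 0 < L) (hL1 : L ≠ 1) (hC : 0 < C) (r : ℝ) :
    C ^ r = (L ^ r) ^ logb L C := by
  rw [← rpow_mul hL.le, mul_comm, rpow_mul hL.le, rpow_logb hL hL1 hC]

lemma IsLinearInterpolation.le_mul_rpow_logb {C₂ : ℝ} (hH : IsLinearInterpolation L a H)
    (hL : 1 < L) (hC₂ : 1 ≤ C₂) (ha : ∀ n, 0 < a n)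
    (hdec : ∀ n, a (n + 1) ≤ a n) (hcmp : ∀ n, a n ≤ C₂ * a (n + 1))
    (hs : 0 < s) (hst : s ≤ t) (ht1 : t ≤ 1) :
    H t ≤ C₂ ^ 2 * (t / s) ^ logb L C₂ * H s := by
  have hL0 : 0 < L := by linarith
  have hC₂0 : 0 < C₂ := by linarith
  have ht : 0 < t := hs.trans_le hst
  have hs1 : s ≤ 1 := hst.trans ht1
  set n := level L t
  set k := level L s - n
  have hm : level L s = n + k := by have := level_le_level hL hs hst; omega
  have hHs : a (n + (k + 1)) ≤ H s := by
    rw [← add_assoc, ← hm]; exact (hH.apply_mem_Icc_level hL hdec hs hs1).1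
  have hHt : H t ≤ a n := (hH.apply_mem_Icc_level hL hdec ht ht1).2
  have hpow : C₂ ^ (k + 1) ≤ C₂ ^ 2 * (t / s) ^ logb L C₂ :=
    calc C₂ ^ (k + 1) = C₂ ^ 2 * C₂ ^ ((k : ℝ) - 1) := by
          rw [← rpow_natCast, ← rpow_natCast, ← rpow_add hC₂0]; push_cast; ring_nf
      _ = C₂ ^ 2 * (L ^ ((k : ℝ) - 1)) ^ logb L C₂ := by
          rw [rpow_eq_rpow_rpow_logb hL0 hL.ne' hC₂0]
      _ ≤ C₂ ^ 2 * (t / s) ^ logb L C₂ := by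
          gcongr
          · exact logb_nonneg hL hC₂
          · exact rpow_level_sub_le_div hL hs hst ht1
  calc H t ≤ C₂ ^ (k + 1) * a (n + (k + 1)) := hHt.trans (le_pow_mul_add hC₂0.le hcmp n _)
    _ ≤ C₂ ^ 2 * (t / s) ^ logb L C₂ * H s := mul_le_mul hpow hHs (ha _).le (by positivity)

end InterpolatedScale

open InterpolatedScale in
theorem stmt13_general (L β₀ C₁ C₂ : ℝ) (hL : 1 < L) (hβ₀ : 0 < β₀)
    (a : ℕ → ℝ) (ha : ∀ n, 0 < a n)
    (hdec : ∀ n, a (n + 1) ≤ a n) (hcmp : ∀ n, a n ≤ C₂ * a (n + 1))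
    (hsub : ∀ n m : ℕ, a (n + m) ≤ C₁ * a n * L ^ (-(m : ℝ) * β₀))
    (H : ℝ → ℝ) (hH0 : H 0 = 0)
    (hHlin : ∀ n : ℕ, ∀ t ∈ Set.Icc (L ^ (-(n : ℝ) - 1)) (L ^ (-(n : ℝ))),
      H t = a (n + 1) + (a n - a (n + 1)) *
        ((t - L ^ (-(n : ℝ) - 1)) / (L ^ (-(n : ℝ)) - L ^ (-(n : ℝ) - 1)))) :
    ∃ C₃ C₄ β' C₅ : ℝ, 0 < C₃ ∧ 0 < C₄ ∧ β₀ ≤ β' ∧ 0 < C₅ ∧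
      (∀ s t : ℝ, 0 < s → s ≤ t → t ≤ 1 →
        C₃ * (t / s) ^ β₀ ≤ H t / H s ∧ H t / H s ≤ C₄ * (t / s) ^ β') ∧
      (∀ r : ℝ, 0 ≤ r → r ≤ 1 / 2 → H (2 * r) ≤ C₅ * H r) := by
  have hH : IsLinearInterpolation L a H := hHlin
  have hC₁ : 1 ≤ C₁ := one_le_of_le_mul_right₀ (ha 0) (by simpa using hsub 0 0)
  have hC₂ : 1 ≤ C₂ := one_le_of_le_mul_right₀ (ha 1) ((hdec 0).trans (hcmp 0))
  set β' := max β₀ (logb L C₂)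
  have upper (s t : ℝ) (hs : 0 < s) (hst : s ≤ t) (ht1 : t ≤ 1) :
      H t ≤ C₂ ^ 2 * (t / s) ^ β' * H s := by
    refine (hH.le_mul_rpow_logb hL hC₂ ha hdec hcmp hs hst ht1).trans ?_
    gcongr
    · exact (hH.apply_pos hL ha hdec hs (hst.trans ht1)).le
    · exact (one_le_div hs).2 hst
    · exact le_max_right _ _
  refine ⟨(C₁ * C₂ * L ^ β₀)⁻¹, C₂ ^ 2, β', C₂ ^ 2 * 2 ^ β', by positivity, by positivity,
    le_max_left _ _, by positivity, fun s t hs hst ht1 => ?_, fun r hr hr2 => ?_⟩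
  · have hHs := hH.apply_pos hL ha hdec hs (hst.trans ht1)
    rw [le_div_iff₀ hHs, div_le_iff₀ hHs, mul_assoc, inv_mul_le_iff₀ (by positivity)]
    exact ⟨hH.rpow_mul_le hL hβ₀.le (by linarith) (by linarith) ha hdec hcmp hsub hs hst ht1,
      upper s t hs hst ht1⟩
  · rcases hr.eq_or_lt with rfl | hr
    · simp [hH0]
    · simpa [mul_div_assoc, hr.ne'] using upper r (2 * r) hr (by linarith) (by linarith)

/-- the time-scale function `H` built by setting `H(L^{-n}) = a_n`
(with `a_{n+1} ≤ a_n ≤ C₂ a_{n+1}` and `a_{n+m} ≤ C₁ a_n L^{-mβ₀}`) and linear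
interpolation satisfies two-sided power bounds
`C₃ (t/s)^{β₀} ≤ H(t)/H(s) ≤ C₄ (t/s)^{β'}` for `0 < s ≤ t ≤ 1` and the
doubling property `H(2r) ≤ C₅ H(r)` for `0 ≤ r ≤ 1/2`. -/
theorem stmt13 (L β₀ C₁ C₂ : ℝ) (hL : 1 < L) (hβ₀ : 0 < β₀)
    (hC₁ : 1 ≤ C₁) (hC₂ : 1 ≤ C₂)
    (a : ℕ → ℝ) (ha : ∀ n, 0 < a n)
    (hdec : ∀ n, a (n + 1) ≤ a n) (hcmp : ∀ n, a n ≤ C₂ * a (n + 1))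
    (hsub : ∀ n m : ℕ, a (n + m) ≤ C₁ * a n * L ^ (-(m : ℝ) * β₀))
    (H : ℝ → ℝ) (hH0 : H 0 = 0)
    (hHn : ∀ n : ℕ, H (L ^ (-(n : ℝ))) = a n)
    (hHlin : ∀ n : ℕ, ∀ t ∈ Set.Icc (L ^ (-(n : ℝ) - 1)) (L ^ (-(n : ℝ))),
      H t = a (n + 1) + (a n - a (n + 1)) *
        ((t - L ^ (-(n : ℝ) - 1)) / (L ^ (-(n : ℝ)) - L ^ (-(n : ℝ) - 1)))) :
    ∃ C₃ C₄ β' C₅ : ℝ, 0 < C₃ ∧ 0 < C₄ ∧ β₀ ≤ β' ∧ 0 < C₅ ∧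
      (∀ s t : ℝ, 0 < s → s ≤ t → t ≤ 1 →
        C₃ * (t / s) ^ β₀ ≤ H t / H s ∧ H t / H s ≤ C₄ * (t / s) ^ β') ∧
      (∀ r : ℝ, 0 ≤ r → r ≤ 1 / 2 → H (2 * r) ≤ C₅ * H r) :=
  stmt13_general L β₀ C₁ C₂ hL hβ₀ a ha hdec hcmp hsub H hH0 hHlin
end
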